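/- arXiv:2506.07470 — 3 statements merged into one kernel-verified Lean document; each statement's English description precedes it below -/
import Mathlib

section
/- Nonlinear Kolmogorov weak law of large numbers, upper bound (claim (4)): under the standing assumptions, and assuming that for each n the truncated variables (Y_{n,k}, 1 ≤ k ≤ n) are pairwise nonlinearly independent, i.e. for all i ≠ k and all functions φ, ψ : ℝ → ℝ satisfying |φ(x) − φ(y)| ≤ C(1 + |x|^m + |y|^m)|x − y| for some C > 0 and m ∈ ℕ (and similarly for ψ) one has 𝔼[φ(Y_{n,k}) ψ(Y_{n,i})] = 𝔼[φ(Y_{n,k})] · 𝔼[ψ(Y_{n,i})], it holds that for every ε > 0, V(S_n/n ≥ μ̄_n + ε) → 0 as n → ∞. -/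
open MeasureTheory Filter

noncomputable def upperExp {Ω : Type*} [MeasurableSpace Ω] (Ps : Set (Measure Ω)) (Z : Ω → ℝ) : ℝ :=
  ⨆ P : Ps, ∫ ω, Z ω ∂(P : Measure Ω)

noncomputable def lowerExp {Ω : Type*} [MeasurableSpace Ω] (Ps : Set (Measure Ω)) (Z : Ω → ℝ) : ℝ :=
  ⨅ P : Ps, ∫ ω, Z ω ∂(P : Measure Ω)

noncomputable def upperCap {Ω : Type*} [MeasurableSpace Ω] (Ps : Set (Measure Ω)) (A : Set Ω) : ℝ :=
  ⨆ P : Ps, ((P : Measure Ω) A).toReal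

noncomputable def lowerCap {Ω : Type*} [MeasurableSpace Ω] (Ps : Set (Measure Ω)) (A : Set Ω) : ℝ :=
  ⨅ P : Ps, ((P : Measure Ω) A).toReal

/-!
Testing the independence of `Y_{n,k}` and `Y_{n,i}` against `φ₂ ≡ -1` and `φ₁ = ±id` shows that
every truncated variable has the same mean `μ⁺_{n,k}` under every `P ∈ 𝒫`, and that distinct ones
are uncorrelated under every `P`. Chebyshev's inequality under each `P` then bounds the deviation of
the truncated sum by `Σ_k E_P[Y_{n,k}²] / (nε)²`, and the layer-cake formula bounds
`E_P[Y_{n,k}²]` by `2n² ∫₀² y V(|X_k| > ny) dy`; splitting at `y = 1` and summing over `k` gives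
`(2/ε²)(∫₀¹ ψ_n + 2ψ_n(1))`. Truncation changes `S_n` only on an event of capacity at most
`ψ_n(1)`. Both bounds vanish: `ψ_n(1) → 0` by assumption and `∫₀¹ ψ_n → 0` by Vitali's theorem.
-/

open Set ProbabilityTheory

section UpperExpectation

variable {Ω : Type*} [MeasurableSpace Ω] {Ps : Set (Measure Ω)}

theorem upperCap_nonneg (A : Set Ω) : 0 ≤ upperCap Ps A :=
  Real.iSup_nonneg fun _ => ENNReal.toReal_nonneg

theorem measureReal_le_upperCap (hprob : ∀ P ∈ Ps, IsProbabilityMeasure P) {P : Measure Ω}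
    (hP : P ∈ Ps) (A : Set Ω) : P.real A ≤ upperCap Ps A := by
  refine le_ciSup (f := fun P : Ps => ((P : Measure Ω) A).toReal) ⟨1, ?_⟩ ⟨P, hP⟩
  rintro _ ⟨Q, rfl⟩
  have := hprob Q Q.2
  exact measureReal_le_one

theorem upperCap_mono (hprob : ∀ P ∈ Ps, IsProbabilityMeasure P) {A B : Set Ω} (hAB : A ⊆ B) :
    upperCap Ps A ≤ upperCap Ps B :=
  Real.iSup_le (fun P => haveI := hprob P P.2;
    (measureReal_mono hAB).trans (measureReal_le_upperCap hprob P.2 B)) (upperCap_nonneg B)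

theorem abs_integral_le_of_abs_le {P : Measure Ω} [IsProbabilityMeasure P] {Z : Ω → ℝ} {C : ℝ}
    (hZ : ∀ ω, |Z ω| ≤ C) : |∫ ω, Z ω ∂P| ≤ C := by
  simpa using norm_integral_le_of_norm_le_const (μ := P)
    (Eventually.of_forall fun ω => (Real.norm_eq_abs (Z ω)).trans_le (hZ ω))

theorem integral_le_upperExp (hprob : ∀ P ∈ Ps, IsProbabilityMeasure P) {Z : Ω → ℝ} {C : ℝ}
    (hZ : ∀ ω, |Z ω| ≤ C) {P : Measure Ω} (hP : P ∈ Ps) : ∫ ω, Z ω ∂P ≤ upperExp Ps Z := by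
  refine le_ciSup (f := fun P : Ps => ∫ ω, Z ω ∂(P : Measure Ω)) ⟨C, ?_⟩ ⟨P, hP⟩
  rintro _ ⟨Q, rfl⟩
  have := hprob Q Q.2
  exact (abs_le.1 (abs_integral_le_of_abs_le hZ)).2

theorem upperExp_const (hprob : ∀ P ∈ Ps, IsProbabilityMeasure P) (hne : Ps.Nonempty) (c : ℝ) :
    upperExp Ps (fun _ => c) = c := by
  have := hne.to_subtype
  have h : ∀ P : Ps, ∫ _, c ∂(P : Measure Ω) = c := fun P => by
    have := hprob P P.2
    simp
  simp only [upperExp, h, ciSup_const]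

/-- `∫ Z dP` is squeezed between `-upperExp Ps (-Z)` and `upperExp Ps Z`. -/
theorem integral_eq_upperExp_of_upperExp_neg (hprob : ∀ P ∈ Ps, IsProbabilityMeasure P)
    {Z : Ω → ℝ} {C : ℝ} (hZ : ∀ ω, |Z ω| ≤ C)
    (hneg : upperExp Ps (fun ω => -Z ω) = -upperExp Ps Z) {P : Measure Ω} (hP : P ∈ Ps) :
    ∫ ω, Z ω ∂P = upperExp Ps Z := by
  have hle := integral_le_upperExp hprob hZ hP
  have hge := integral_le_upperExp hprob (Z := fun ω => -Z ω) (by simpa using hZ) hP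
  rw [integral_neg, hneg] at hge
  linarith

end UpperExpectation

section Independence

variable {Ω : Type*} [MeasurableSpace Ω] {Ps : Set (Measure Ω)}

/-- Peng's class `C_{l,Lip}(ℝ)` of locally Lipschitz functions with polynomial growth. -/
def PolyLipschitz (φ : ℝ → ℝ) : Prop :=
  ∃ C : ℝ, 0 < C ∧ ∃ m : ℕ, ∀ x y : ℝ, |φ x - φ y| ≤ C * (1 + |x| ^ m + |y| ^ m) * |x - y|

theorem LipschitzWith.polyLipschitz {K : NNReal} {φ : ℝ → ℝ} (hφ : LipschitzWith K φ) :
    PolyLipschitz φ := by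
  refine ⟨K + 1, by positivity, 0, fun x y => ?_⟩
  have h := hφ.dist_le_mul x y
  simp only [Real.dist_eq] at h
  simp only [pow_zero]
  nlinarith [abs_nonneg (x - y), K.2]

def UpperIndep (Ps : Set (Measure Ω)) (U V : Ω → ℝ) : Prop :=
  ∀ φ₁ φ₂ : ℝ → ℝ, PolyLipschitz φ₁ → PolyLipschitz φ₂ →
    upperExp Ps (fun ω => φ₁ (U ω) * φ₂ (V ω)) =
      upperExp Ps (fun ω => φ₁ (U ω)) * upperExp Ps (fun ω => φ₂ (V ω))

namespace UpperIndep

variable {U V : Ω → ℝ}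

/-- Testing independence against the constant `-1` shows that `U` has no mean uncertainty. -/
theorem upperExp_neg_left (h : UpperIndep Ps U V) (hprob : ∀ P ∈ Ps, IsProbabilityMeasure P)
    (hne : Ps.Nonempty) : upperExp Ps (fun ω => -U ω) = -upperExp Ps U := by
  have h' := h (fun x => x) (fun _ => -1) LipschitzWith.id.polyLipschitz
    (LipschitzWith.const (-1)).polyLipschitz
  simp only [mul_neg_one, upperExp_const hprob hne] at h'
  exact h'

theorem integral_eq_upperExp (h : UpperIndep Ps U V) (hprob : ∀ P ∈ Ps, IsProbabilityMeasure P)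
    {C : ℝ} (hU : ∀ ω, |U ω| ≤ C) {P : Measure Ω} (hP : P ∈ Ps) :
    ∫ ω, U ω ∂P = upperExp Ps U :=
  integral_eq_upperExp_of_upperExp_neg hprob hU (h.upperExp_neg_left hprob ⟨P, hP⟩) hP

theorem integral_mul_eq (h : UpperIndep Ps U V) (hprob : ∀ P ∈ Ps, IsProbabilityMeasure P)
    {C D : ℝ} (hU : ∀ ω, |U ω| ≤ C) (hV : ∀ ω, |V ω| ≤ D) {P : Measure Ω} (hP : P ∈ Ps) :
    ∫ ω, U ω * V ω ∂P = upperExp Ps U * upperExp Ps V := by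
  have hpos := h (fun x => x) (fun x => x) LipschitzWith.id.polyLipschitz
    LipschitzWith.id.polyLipschitz
  have hneg := h (fun x => -x) (fun x => x) LipschitzWith.id.neg.polyLipschitz
    LipschitzWith.id.polyLipschitz
  rw [h.upperExp_neg_left hprob ⟨P, hP⟩] at hneg
  simp only [neg_mul] at hneg
  have hUV : ∀ ω, |U ω * V ω| ≤ C * D := fun ω => by
    rw [abs_mul]
    exact mul_le_mul (hU ω) (hV ω) (abs_nonneg _) ((abs_nonneg _).trans (hU ω))
  rw [integral_eq_upperExp_of_upperExp_neg hprob hUV (by rw [hneg, hpos]) hP, hpos]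

end UpperIndep

end Independence

section SecondMoment

variable {Ω : Type*} [MeasurableSpace Ω] {P : Measure Ω}

theorem variance_sum_of_uncorrelated [IsProbabilityMeasure P] {ι : Type*} {s : Finset ι}
    {Y : ι → Ω → ℝ} (hY : ∀ k ∈ s, MemLp (Y k) 2 P)
    (hcorr : ∀ k ∈ s, ∀ i ∈ s, k ≠ i → ∫ ω, Y k ω * Y i ω ∂P = P[Y k] * P[Y i]) :
    Var[fun ω => ∑ k ∈ s, Y k ω; P] = ∑ k ∈ s, Var[Y k; P] := by
  rw [variance_fun_sum' hY]
  refine Finset.sum_congr rfl fun k hk => ?_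
  rw [Finset.sum_eq_single_of_mem k hk fun i hi hik => ?_, covariance_self (hY k hk).aemeasurable]
  rw [covariance_eq_sub (hY k hk) (hY i hi)]
  exact sub_eq_zero.2 (hcorr k hk i hi (Ne.symm hik))

theorem measureReal_sum_sub_ge_le [IsProbabilityMeasure P] {ι : Type*} {s : Finset ι}
    {Y : ι → Ω → ℝ} {m : ι → ℝ} (hY : ∀ k ∈ s, MemLp (Y k) 2 P)
    (hmean : ∀ k ∈ s, ∫ ω, Y k ω ∂P = m k)
    (hcorr : ∀ k ∈ s, ∀ i ∈ s, k ≠ i → ∫ ω, Y k ω * Y i ω ∂P = m k * m i) {c : ℝ} (hc : 0 < c) :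
    P.real {ω | c ≤ ∑ k ∈ s, Y k ω - ∑ k ∈ s, m k} ≤ (∑ k ∈ s, ∫ ω, Y k ω ^ 2 ∂P) / c ^ 2 := by
  set T := fun ω => ∑ k ∈ s, Y k ω
  have hT : MemLp T 2 P := memLp_finsetSum s hY
  have hmeanT : P[T] = ∑ k ∈ s, m k := by
    rw [integral_finsetSum s fun k hk => (hY k hk).integrable one_le_two]
    exact Finset.sum_congr rfl hmean
  have hvar : Var[T; P] ≤ ∑ k ∈ s, ∫ ω, Y k ω ^ 2 ∂P := by
    rw [variance_sum_of_uncorrelated hY fun k hk i hi hik => by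
      rw [hmean k hk, hmean i hi, hcorr k hk i hi hik]]
    exact Finset.sum_le_sum fun k hk =>
      variance_le_expectation_sq (hY k hk).aestronglyMeasurable
  calc P.real {ω | c ≤ ∑ k ∈ s, Y k ω - ∑ k ∈ s, m k}
      ≤ P.real {ω | c ≤ |T ω - P[T]|} :=
        measureReal_mono fun ω (hω : c ≤ _) => hω.trans (hmeanT ▸ le_abs_self _)
    _ ≤ Var[T; P] / c ^ 2 := by
        rw [measureReal_def]
        exact ENNReal.toReal_le_of_le_ofReal (by have := variance_nonneg T P; positivity)
          (meas_ge_le_variance_div_sq hT hc)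
    _ ≤ _ := by gcongr

end SecondMoment

section LayerCake

variable {Ω : Type*} [MeasurableSpace Ω] {P : Measure Ω}

theorem integral_sq_eq_integral_Ioi [IsFiniteMeasure P] {Z : Ω → ℝ} (hZ : Measurable Z) {C : ℝ}
    (hZC : ∀ ω, |Z ω| ≤ C) :
    ∫ ω, Z ω ^ 2 ∂P = ∫ s in Ioi 0, 2 * s * P.real {ω | s < |Z ω|} := by
  have hint : Integrable (fun ω => Z ω ^ 2) P :=
    Integrable.of_bound (hZ.pow_const 2).aestronglyMeasurable (C ^ 2) (Eventually.of_forall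
      fun ω => by simpa [sq_abs] using pow_le_pow_left₀ (abs_nonneg _) (hZC ω) 2)
  rw [hint.integral_eq_integral_meas_lt (Eventually.of_forall fun ω => sq_nonneg (Z ω)),
    ← integral_comp_rpow_Ioi_of_pos (p := 2) two_pos]
  refine setIntegral_congr_fun measurableSet_Ioi fun s (hs : 0 < s) => ?_
  have hset : {ω | s ^ 2 < Z ω ^ 2} = {ω | s < |Z ω|} := by
    ext ω
    simp [sq_lt_sq, abs_of_pos hs]
  rw [show (2 : ℝ) - 1 = 1 by norm_num, Real.rpow_one, Real.rpow_two, hset, smul_eq_mul]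

theorem integral_sq_eq_integral_Ioc [IsFiniteMeasure P] {Z : Ω → ℝ} (hZ : Measurable Z)
    {a b : ℝ} (ha : 0 < a) (hZb : ∀ ω, |Z ω| ≤ a * b) :
    ∫ ω, Z ω ^ 2 ∂P = 2 * a ^ 2 * ∫ y in Ioc 0 b, y * P.real {ω | a * y < |Z ω|} := by
  have hvanish : ∀ y ∈ Ioi (0 : ℝ) \ Ioc 0 b, y * P.real {ω | a * y < |Z ω|} = 0 := by
    rintro y ⟨hy0, hyb⟩
    have hby : b < y := by simp_all
    have hempty : {ω | a * y < |Z ω|} = ∅ :=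
      eq_empty_of_forall_notMem fun ω (hω : a * y < |Z ω|) =>
        (hω.trans_le (hZb ω)).not_ge (by gcongr)
    simp [hempty]
  have hscale := integral_comp_mul_left_Ioi' (fun s => 2 * s * P.real {ω | s < |Z ω|}) 0 ha
  rw [mul_zero] at hscale
  rw [integral_sq_eq_integral_Ioi hZ hZb, ← hscale,
    ← setIntegral_eq_of_subset_of_forall_sdiff_eq_zero measurableSet_Ioi Ioc_subset_Ioi_self
      hvanish, smul_eq_mul, ← integral_const_mul, ← integral_const_mul]
  congr 1 with y
  ring

end LayerCake

section Tail

theorem Antitone.intervalIntegrable_id_mul {h : ℝ → ℝ} (hh : Antitone h) {a b : ℝ} :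
    IntervalIntegrable (fun y => y * h y) volume a b :=
  hh.intervalIntegrable.continuousOn_mul continuousOn_id

theorem Antitone.integral_Ioc_zero_two_id_mul_le {h : ℝ → ℝ} (hh : Antitone h)
    (h0 : ∀ y, 0 ≤ h y) :
    ∫ y in Ioc 0 2, y * h y ≤ (∫ y in Icc 0 1, y * h y) + 2 * h 1 := by
  rw [← intervalIntegral.integral_of_le zero_le_two,
    ← intervalIntegral.integral_add_adjacent_intervals (b := 1) hh.intervalIntegrable_id_mul
      hh.intervalIntegrable_id_mul, intervalIntegral.integral_of_le zero_le_one,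
    integral_Icc_eq_integral_Ioc]
  gcongr
  calc ∫ y in (1 : ℝ)..2, y * h y ≤ ∫ _ in (1 : ℝ)..2, 2 * h 1 :=
        intervalIntegral.integral_mono_on one_le_two hh.intervalIntegrable_id_mul
          intervalIntegrable_const fun y hy =>
            mul_le_mul hy.2 (hh hy.1) (h0 y) zero_le_two
    _ = 2 * h 1 := by norm_num

variable {Ω : Type*} [MeasurableSpace Ω] {Ps : Set (Measure Ω)}

theorem antitone_upperCap_lt_abs (hprob : ∀ P ∈ Ps, IsProbabilityMeasure P) {a : ℝ} (ha : 0 ≤ a)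
    (X : Ω → ℝ) : Antitone fun y => upperCap Ps {ω | a * y < |X ω|} :=
  fun _ _ hyy' => upperCap_mono hprob fun _ hω =>
    (mul_le_mul_of_nonneg_left hyy' ha).trans_lt hω

theorem integral_sq_le_upperCap (hprob : ∀ P ∈ Ps, IsProbabilityMeasure P) {P : Measure Ω}
    (hP : P ∈ Ps) {Z X : Ω → ℝ} (hZ : Measurable Z) (hZX : ∀ ω, |Z ω| ≤ |X ω|) {a : ℝ}
    (ha : 0 < a) (hZa : ∀ ω, |Z ω| ≤ a * 2) :
    ∫ ω, Z ω ^ 2 ∂P ≤ 2 * a ^ 2 * ((∫ y in Icc 0 1, y * upperCap Ps {ω | a * y < |X ω|})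
      + 2 * upperCap Ps {ω | a * 1 < |X ω|}) := by
  have := hprob P hP
  have hanti := antitone_upperCap_lt_abs hprob ha.le X
  have hantiP : Antitone fun y => P.real {ω | a * y < |Z ω|} := fun _ _ hyy' =>
    measureReal_mono fun _ hω => (mul_le_mul_of_nonneg_left hyy' ha.le).trans_lt hω
  rw [integral_sq_eq_integral_Ioc hZ ha hZa]
  gcongr 2 * a ^ 2 * ?_
  calc ∫ y in Ioc 0 2, y * P.real {ω | a * y < |Z ω|}
      ≤ ∫ y in Ioc 0 2, y * upperCap Ps {ω | a * y < |X ω|} :=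
        setIntegral_mono_on hantiP.intervalIntegrable_id_mul.1 hanti.intervalIntegrable_id_mul.1
          measurableSet_Ioc fun y hy => mul_le_mul_of_nonneg_left
            ((measureReal_mono fun _ hω => hω.trans_le (hZX _)).trans
              (measureReal_le_upperCap hprob hP _)) hy.1.le
    _ ≤ _ := hanti.integral_Ioc_zero_two_id_mul_le fun _ => upperCap_nonneg _

end Tail

section Truncation

variable {c : ℝ → ℝ}

theorem abs_mul_cutoff_le (hc : ∀ x, c x ∈ Icc (0 : ℝ) 1) (x : ℝ) : |x * c (|x|)| ≤ |x| := by
  rw [abs_mul, abs_of_nonneg (hc _).1]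
  exact mul_le_of_le_one_right (abs_nonneg x) (hc _).2

theorem abs_mul_cutoff_le_of_eq_zero (hc : ∀ x, c x ∈ Icc (0 : ℝ) 1) {M : ℝ} (hM : 0 ≤ M)
    (hzero : ∀ x, M ≤ |x| → c x = 0) (x : ℝ) : |x * c (|x|)| ≤ M := by
  rcases le_or_gt M |x| with hx | hx
  · rw [hzero |x| (by rwa [abs_abs]), mul_zero, abs_zero]
    exact hM
  · exact (abs_mul_cutoff_le hc x).trans hx.le

theorem setOf_mean_add_le_subset {Ω : Type*} {n : ℕ} (hn : 0 < n) {X Y : ℕ → Ω → ℝ}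
    (hYX : ∀ k ω, |X k ω| ≤ n → Y k ω = X k ω) (m : ℕ → ℝ) (ε : ℝ) :
    {ω | 1 / (n : ℝ) * ∑ k ∈ Finset.Icc 1 n, m k + ε ≤ (∑ k ∈ Finset.Icc 1 n, X k ω) / n} ⊆
      {ω | n * ε ≤ ∑ k ∈ Finset.Icc 1 n, Y k ω - ∑ k ∈ Finset.Icc 1 n, m k} ∪
        ⋃ k ∈ Finset.Icc 1 n, {ω | (n : ℝ) * 1 < |X k ω|} := by
  intro ω hω
  rw [mem_ofPred_eq] at hω
  by_cases hsmall : ∀ k ∈ Finset.Icc 1 n, |X k ω| ≤ n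
  · left
    have hn' : (0 : ℝ) < n := Nat.cast_pos.2 hn
    rw [mem_ofPred_eq, Finset.sum_congr rfl fun k hk => hYX k ω (hsmall k hk)]
    rw [le_div_iff₀ hn'] at hω
    field_simp at hω
    linarith
  · right
    push Not at hsmall
    obtain ⟨k, hk, hXk⟩ := hsmall
    exact mem_biUnion hk (show (n : ℝ) * 1 < |X k ω| by rwa [mul_one])

end Truncation

section Deviation

variable {Ω : Type*} [MeasurableSpace Ω] {Ps : Set (Measure Ω)}

/-- The function `ψ_n` of the paper. -/
noncomputable def tailProfile (Ps : Set (Measure Ω)) (X : ℕ → Ω → ℝ) (n : ℕ) (y : ℝ) : ℝ :=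
  ∑ k ∈ Finset.Icc 1 n, y * upperCap Ps {ω | (n : ℝ) * y < |X k ω|}

theorem tailProfile_nonneg (X : ℕ → Ω → ℝ) (n : ℕ) {y : ℝ} (hy : 0 ≤ y) :
    0 ≤ tailProfile Ps X n y :=
  Finset.sum_nonneg fun _ _ => mul_nonneg hy (upperCap_nonneg _)

theorem upperCap_mean_deviation_le (hprob : ∀ P ∈ Ps, IsProbabilityMeasure P) {n : ℕ}
    (hn : 2 ≤ n) {X Y : ℕ → Ω → ℝ} (hYm : ∀ k, Measurable (Y k))
    (hYX : ∀ k ω, |Y k ω| ≤ |X k ω|) (hYn : ∀ k ω, |Y k ω| ≤ n + 1)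
    (hYeq : ∀ k ω, |X k ω| ≤ n → Y k ω = X k ω)
    (hind : ∀ i ∈ Finset.Icc 1 n, ∀ k ∈ Finset.Icc 1 n, i ≠ k → UpperIndep Ps (Y k) (Y i))
    {ε : ℝ} (hε : 0 < ε) :
    upperCap Ps {ω | 1 / (n : ℝ) * ∑ k ∈ Finset.Icc 1 n, upperExp Ps (Y k) + ε ≤
        (∑ k ∈ Finset.Icc 1 n, X k ω) / n} ≤
      2 / ε ^ 2 * ((∫ y in Icc 0 1, tailProfile Ps X n y) + 2 * tailProfile Ps X n 1) +
        tailProfile Ps X n 1 := by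
  have hn0 : (0 : ℝ) < n := by positivity
  have hψ1 := tailProfile_nonneg (Ps := Ps) X n zero_le_one
  have hψint : 0 ≤ ∫ y in Icc 0 1, tailProfile Ps X n y :=
    setIntegral_nonneg measurableSet_Icc fun y hy => tailProfile_nonneg X n hy.1
  refine Real.iSup_le (fun ⟨P, hP⟩ => ?_) (by positivity)
  have := hprob P hP
  have hmem : ∀ k, MemLp (Y k) 2 P := fun k =>
    MemLp.of_bound (hYm k).aestronglyMeasurable _ (Eventually.of_forall (hYn k))
  have hmean : ∀ k ∈ Finset.Icc 1 n, ∫ ω, Y k ω ∂P = upperExp Ps (Y k) := fun k hk => by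
    obtain ⟨i, hi, hik⟩ := (Finset.Icc 1 n).exists_mem_ne (by rw [Nat.card_Icc]; omega) k
    exact (hind i hi k hk hik).integral_eq_upperExp hprob (hYn k) hP
  have hcorr : ∀ k ∈ Finset.Icc 1 n, ∀ i ∈ Finset.Icc 1 n, k ≠ i →
      ∫ ω, Y k ω * Y i ω ∂P = upperExp Ps (Y k) * upperExp Ps (Y i) := fun k hk i hi hki =>
    (hind i hi k hk hki.symm).integral_mul_eq hprob (hYn k) (hYn i) hP
  have hmoment : ∑ k ∈ Finset.Icc 1 n, ∫ ω, Y k ω ^ 2 ∂P ≤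
      2 * n ^ 2 * ((∫ y in Icc 0 1, tailProfile Ps X n y) + 2 * tailProfile Ps X n 1) := by
    have hint : ∀ k ∈ Finset.Icc 1 n,
        IntegrableOn (fun y => y * upperCap Ps {ω | (n : ℝ) * y < |X k ω|}) (Icc 0 1) :=
      fun k _ => (integrableOn_Icc_iff_integrableOn_Ioc (by simp)).2
        (antitone_upperCap_lt_abs hprob hn0.le (X k)).intervalIntegrable_id_mul.1
    have hsplit : (∫ y in Icc 0 1, tailProfile Ps X n y) + 2 * tailProfile Ps X n 1 =
        ∑ k ∈ Finset.Icc 1 n, ((∫ y in Icc 0 1, y * upperCap Ps {ω | (n : ℝ) * y < |X k ω|})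
          + 2 * upperCap Ps {ω | (n : ℝ) * 1 < |X k ω|}) := by
      simp only [tailProfile, integral_finsetSum _ hint, Finset.sum_add_distrib, Finset.mul_sum,
        one_mul]
    have hYn2 : ∀ k ω, |Y k ω| ≤ n * 2 := fun k ω => by
      have : (1 : ℝ) ≤ n := by exact_mod_cast (by omega : 1 ≤ n)
      linarith [hYn k ω]
    rw [hsplit, Finset.mul_sum]
    exact Finset.sum_le_sum fun k _ =>
      integral_sq_le_upperCap hprob hP (hYm k) (hYX k) hn0 (hYn2 k)
  have htail : ∑ k ∈ Finset.Icc 1 n, P.real {ω | (n : ℝ) * 1 < |X k ω|} ≤ tailProfile Ps X n 1 :=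
    Finset.sum_le_sum fun k _ => (one_mul (P.real _)).symm ▸ mul_le_mul_of_nonneg_left
      (measureReal_le_upperCap hprob hP _) zero_le_one
  calc P.real _
      ≤ P.real {ω | n * ε ≤ ∑ k ∈ Finset.Icc 1 n, Y k ω - ∑ k ∈ Finset.Icc 1 n, upperExp Ps (Y k)}
          + ∑ k ∈ Finset.Icc 1 n, P.real {ω | (n : ℝ) * 1 < |X k ω|} :=
        (measureReal_mono (setOf_mean_add_le_subset (by omega) hYeq _ ε)).trans
          ((measureReal_union_le _ _).trans (add_le_add le_rfl (measureReal_biUnion_finset_le _ _)))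
    _ ≤ (∑ k ∈ Finset.Icc 1 n, ∫ ω, Y k ω ^ 2 ∂P) / (n * ε) ^ 2 + tailProfile Ps X n 1 :=
        add_le_add (measureReal_sum_sub_ge_le (fun k _ => hmem k) hmean hcorr (by positivity)) htail
    _ ≤ 2 * n ^ 2 * ((∫ y in Icc 0 1, tailProfile Ps X n y) + 2 * tailProfile Ps X n 1)
          / (n * ε) ^ 2 + tailProfile Ps X n 1 := by gcongr
    _ = _ := by field_simp

end Deviation

theorem tendsto_integral_of_uniformIntegrable {α : Type*} [MeasurableSpace α] {μ : Measure α}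
    [IsFiniteMeasure μ] {f : ℕ → α → ℝ} {g : α → ℝ} (hf : UniformIntegrable f 1 μ)
    (hg : MemLp g 1 μ) (hfg : ∀ᵐ x ∂μ, Tendsto (fun n => f n x) atTop (nhds (g x))) :
    Tendsto (fun n => ∫ x, f n x ∂μ) atTop (nhds (∫ x, g x ∂μ)) :=
  tendsto_integral_of_L1' g hg.1 (Eventually.of_forall fun n => (hf.memLp n).integrable le_rfl)
    (tendsto_Lp_finite_of_tendsto_ae le_rfl ENNReal.one_ne_top hf.1 hg hf.2.1 hfg)

theorem nonlinear_wlln_upper_general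
    {Ω : Type*} [MeasurableSpace Ω] (Ps : Set (Measure Ω))
    (hprob : ∀ P ∈ Ps, IsProbabilityMeasure P)
    (X : ℕ → Ω → ℝ) (hX : ∀ k, Measurable (X k))
    (χ : ℕ → ℝ → ℝ)
    (hχLip : ∀ n, ∃ K : NNReal, LipschitzWith K (χ n))
    (hχone : ∀ n : ℕ, ∀ x : ℝ, |x| ≤ (n : ℝ) → χ n x = 1)
    (hχzero : ∀ n : ℕ, ∀ x : ℝ, (n : ℝ) + 1 ≤ |x| → χ n x = 0)
    (hχrange : ∀ n : ℕ, ∀ x : ℝ, χ n x ∈ Set.Icc (0 : ℝ) 1)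
    (Y : ℕ → ℕ → Ω → ℝ) (hY : ∀ n k, Y n k = fun ω => X k ω * χ n |X k ω|)
    (S : ℕ → Ω → ℝ) (hS : ∀ n, S n = fun ω => ∑ k ∈ Finset.Icc 1 n, X k ω)
    (ψ : ℕ → ℝ → ℝ)
    (hψ : ∀ n : ℕ, ∀ y : ℝ, ψ n y = ∑ k ∈ Finset.Icc 1 n, y * upperCap Ps {ω | (n : ℝ) * y < |X k ω|})
    (hψ0 : ∀ y ∈ Set.Icc (0 : ℝ) 1, Tendsto (fun n => ψ n y) atTop (nhds 0))
    (hUI : UniformIntegrable (fun n : ℕ => ψ n) 1 (volume.restrict (Set.Icc (0 : ℝ) 1)))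
    (μp : ℕ → ℕ → ℝ) (hμp : ∀ n k, μp n k = upperExp Ps (Y n k))
    (μbar : ℕ → ℝ) (hμbar : ∀ n : ℕ, μbar n = (1 / (n : ℝ)) * ∑ k ∈ Finset.Icc 1 n, μp n k)
    (hindep : ∀ n : ℕ, ∀ i ∈ Finset.Icc 1 n, ∀ k ∈ Finset.Icc 1 n, i ≠ k →
      ∀ φ₁ φ₂ : ℝ → ℝ,
      (∃ C : ℝ, 0 < C ∧ ∃ m : ℕ, ∀ x y : ℝ,
        |φ₁ x - φ₁ y| ≤ C * (1 + |x| ^ m + |y| ^ m) * |x - y|) →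
      (∃ C : ℝ, 0 < C ∧ ∃ m : ℕ, ∀ x y : ℝ,
        |φ₂ x - φ₂ y| ≤ C * (1 + |x| ^ m + |y| ^ m) * |x - y|) →
      upperExp Ps (fun ω => φ₁ (Y n k ω) * φ₂ (Y n i ω)) =
        upperExp Ps (fun ω => φ₁ (Y n k ω)) * upperExp Ps (fun ω => φ₂ (Y n i ω)))
    :
    ∀ ε : ℝ, 0 < ε →
      Tendsto (fun n => upperCap Ps {ω | μbar n + ε ≤ S n ω / n}) atTop (nhds 0) := by
  intro ε hε
  obtain rfl : ψ = tailProfile Ps X := funext fun n => funext (hψ n)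
  have hint : Tendsto (fun n => ∫ y in Icc 0 1, tailProfile Ps X n y) atTop (nhds 0) := by
    simpa using tendsto_integral_of_uniformIntegrable hUI MemLp.zero
      ((ae_restrict_iff' measurableSet_Icc).2 (ae_of_all _ hψ0))
  have hone := hψ0 1 ⟨zero_le_one, le_rfl⟩
  have hbound : ∀ n ≥ 2, upperCap Ps {ω | μbar n + ε ≤ S n ω / n} ≤
      2 / ε ^ 2 * ((∫ y in Icc 0 1, tailProfile Ps X n y) + 2 * tailProfile Ps X n 1) +
        tailProfile Ps X n 1 := fun n hn => by
    simp only [hμbar, hμp, hS]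
    refine upperCap_mean_deviation_le hprob hn (fun k => ?_) (fun k ω => ?_) (fun k ω => ?_)
      (fun k ω hk => ?_) (hindep n) hε <;> simp only [hY]
    · exact (hX k).mul ((hχLip n).choose_spec.continuous.measurable.comp (hX k).abs)
    · exact abs_mul_cutoff_le (hχrange n) _
    · exact abs_mul_cutoff_le_of_eq_zero (hχrange n) (by positivity) (hχzero n) _
    · rw [hχone n _ (by rwa [abs_abs]), mul_one]
  refine squeeze_zero' (Eventually.of_forall fun n => upperCap_nonneg _)
    (eventually_atTop.2 ⟨2, hbound⟩) ?_
  simpa using ((hint.add (hone.const_mul 2)).const_mul (2 / ε ^ 2)).add hone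

/-- nonlinear Kolmogorov WLLN, upper bound: under the standing
assumptions and pairwise nonlinear independence of the truncated variables,
for every ε > 0, V(Sₙ/n ≥ μ̄ₙ + ε) → 0. -/
theorem nonlinear_wlln_upper
    {Ω : Type*} [MeasurableSpace Ω] (Ps : Set (Measure Ω)) (hne : Ps.Nonempty)
    (hprob : ∀ P ∈ Ps, IsProbabilityMeasure P)
    (X : ℕ → Ω → ℝ) (hX : ∀ k, Measurable (X k))
    (χ : ℕ → ℝ → ℝ)
    (hχLip : ∀ n, ∃ K : NNReal, LipschitzWith K (χ n))
    (hχone : ∀ n : ℕ, ∀ x : ℝ, |x| ≤ (n : ℝ) → χ n x = 1)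
    (hχzero : ∀ n : ℕ, ∀ x : ℝ, (n : ℝ) + 1 ≤ |x| → χ n x = 0)
    (hχrange : ∀ n : ℕ, ∀ x : ℝ, χ n x ∈ Set.Icc (0 : ℝ) 1)
    (Y : ℕ → ℕ → Ω → ℝ) (hY : ∀ n k, Y n k = fun ω => X k ω * χ n |X k ω|)
    (S : ℕ → Ω → ℝ) (hS : ∀ n, S n = fun ω => ∑ k ∈ Finset.Icc 1 n, X k ω)
    (ψ : ℕ → ℝ → ℝ)
    (hψ : ∀ n : ℕ, ∀ y : ℝ, ψ n y = ∑ k ∈ Finset.Icc 1 n, y * upperCap Ps {ω | (n : ℝ) * y < |X k ω|})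
    (hψ0 : ∀ y ∈ Set.Icc (0 : ℝ) 1, Tendsto (fun n => ψ n y) atTop (nhds 0))
    (hUI : UniformIntegrable (fun n : ℕ => ψ n) 1 (volume.restrict (Set.Icc (0 : ℝ) 1)))
    (μp : ℕ → ℕ → ℝ) (hμp : ∀ n k, μp n k = upperExp Ps (Y n k))
    (μbar : ℕ → ℝ) (hμbar : ∀ n : ℕ, μbar n = (1 / (n : ℝ)) * ∑ k ∈ Finset.Icc 1 n, μp n k)
    (hindep : ∀ n : ℕ, ∀ i ∈ Finset.Icc 1 n, ∀ k ∈ Finset.Icc 1 n, i ≠ k →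
      ∀ φ₁ φ₂ : ℝ → ℝ,
      (∃ C : ℝ, 0 < C ∧ ∃ m : ℕ, ∀ x y : ℝ,
        |φ₁ x - φ₁ y| ≤ C * (1 + |x| ^ m + |y| ^ m) * |x - y|) →
      (∃ C : ℝ, 0 < C ∧ ∃ m : ℕ, ∀ x y : ℝ,
        |φ₂ x - φ₂ y| ≤ C * (1 + |x| ^ m + |y| ^ m) * |x - y|) →
      upperExp Ps (fun ω => φ₁ (Y n k ω) * φ₂ (Y n i ω)) =
        upperExp Ps (fun ω => φ₁ (Y n k ω)) * upperExp Ps (fun ω => φ₂ (Y n i ω)))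
    :
    ∀ ε : ℝ, 0 < ε →
      Tendsto (fun n => upperCap Ps {ω | μbar n + ε ≤ S n ω / n}) atTop (nhds 0) :=
  nonlinear_wlln_upper_general Ps hprob X hX χ hχLip hχone hχzero hχrange Y hY S hS ψ hψ hψ0 hUI μp
    hμp μbar hμbar hindep
end

section
/- Equivalence with Kolmogorov's condition in the classical linear i.i.d. case (Remark 4): let X be a real random variable on a probability space (Ω, ℱ, P), and define ψ_n(y) := n y P(|X| > n y) for y ∈ [0,1] and n ≥ 1. Then the following are equivalent: (i) t · P(|X| > t) → 0 as t → ∞; (ii) ψ_n(y) → 0 as n → ∞ for every y ∈ (0, 1], and the family of functions (ψ_n)_{n ≥ 1} is uniformly integrable on [0,1] with respect to Lebesgue measure. -/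
open MeasureTheory Filter
open scoped ENNReal

/-- in the classical linear i.i.d. case, with
`ψ_n(y) = n y P(|X| > n y)`, the Kolmogorov condition `t P(|X| > t) → 0 (t → ∞)`
is equivalent to: `ψ_n(y) → 0` for every `y ∈ (0, 1]` together with the uniform
integrability of the family `(ψ_n)` on `[0,1]` w.r.t. Lebesgue measure. -/
theorem kolmogorov_condition_iff_psi
    {Ω : Type*} [MeasurableSpace Ω] (P : Measure Ω) [IsProbabilityMeasure P]
    (X : Ω → ℝ) (hX : Measurable X)
    (ψ : ℕ → ℝ → ℝ)
    (hψ : ∀ n : ℕ, ∀ y : ℝ, ψ n y = (n : ℝ) * y * (P {ω | (n : ℝ) * y < |X ω|}).toReal) :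
    Tendsto (fun t : ℝ => t * (P {ω | t < |X ω|}).toReal) atTop (nhds 0) ↔
      ((∀ y ∈ Set.Ioc (0 : ℝ) 1, Tendsto (fun n => ψ n y) atTop (nhds 0)) ∧
        UniformIntegrable (fun n : ℕ => ψ n) 1 (volume.restrict (Set.Icc (0 : ℝ) 1))) := by
  have hPle : ∀ s : Set Ω, (P s).toReal ≤ 1 := by
    intro s
    have h := ENNReal.toReal_mono (by simp) (prob_le_one (μ := P) (s := s))
    simpa using h
  have hPnn : ∀ s : Set Ω, 0 ≤ (P s).toReal := fun s => ENNReal.toReal_nonneg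
  have hmono : ∀ n : ℕ, Antitone (fun y : ℝ => (P {ω | (n : ℝ) * y < |X ω|}).toReal) := by
    intro n y y' hyy'
    refine ENNReal.toReal_mono (measure_ne_top _ _) (measure_mono ?_)
    intro ω hω
    have : (n : ℝ) * y ≤ (n : ℝ) * y' :=
      mul_le_mul_of_nonneg_left hyy' (Nat.cast_nonneg n)
    exact lt_of_le_of_lt this hω
  have hmeas : ∀ n : ℕ, Measurable (ψ n) := by
    intro n
    have h : ψ n = fun y : ℝ =>
        ((n : ℝ) * y) * (P {ω | (n : ℝ) * y < |X ω|}).toReal := funext (hψ n)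
    rw [h]
    exact (measurable_const.mul measurable_id).mul (hmono n).measurable
  have hψnn : ∀ (n : ℕ) (y : ℝ), 0 ≤ y → 0 ≤ ψ n y := by
    intro n y hy
    rw [hψ]
    exact mul_nonneg (mul_nonneg (Nat.cast_nonneg n) hy) (hPnn _)
  constructor
  · intro hK
    -- a uniform bound M on t ↦ t * P(|X| > t) for t ≥ 0
    obtain ⟨T, hT⟩ : ∃ T : ℝ, ∀ t ≥ T,
        t * (P {ω | t < |X ω|}).toReal ≤ 1 := by
      have h := hK.eventually (eventually_le_nhds (show (0:ℝ) < 1 by norm_num))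
      rw [eventually_atTop] at h
      exact h
    set M : ℝ := max T 1 with hMdef
    have hM1 : (1 : ℝ) ≤ M := le_max_right _ _
    have hM0 : (0 : ℝ) < M := lt_of_lt_of_le one_pos hM1
    have hbound : ∀ t : ℝ, 0 ≤ t → t * (P {ω | t < |X ω|}).toReal ≤ M := by
      intro t ht
      rcases le_or_gt t M with h | h
      · calc t * (P {ω | t < |X ω|}).toReal ≤ t * 1 :=
            mul_le_mul_of_nonneg_left (hPle _) ht
          _ ≤ M := by simpa using h
      · exact (hT t (le_trans (le_max_left _ _) h.le)).trans hM1
    have hψbd : ∀ (n : ℕ) (y : ℝ), y ∈ Set.Icc (0:ℝ) 1 → ‖ψ n y‖ ≤ M := by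
      intro n y hy
      rw [Real.norm_of_nonneg (hψnn n y hy.1), hψ]
      exact hbound _ (mul_nonneg (Nat.cast_nonneg n) hy.1)
    set μ : Measure ℝ := volume.restrict (Set.Icc (0:ℝ) 1) with hμ
    have hae : ∀ n : ℕ, ∀ᵐ y ∂μ, ‖ψ n y‖ ≤ M :=
      fun n => (ae_restrict_mem measurableSet_Icc).mono (hψbd n)
    refine ⟨?_, ?_⟩
    · intro y hy
      have hy0 : (0:ℝ) < y := hy.1
      have htend : Tendsto (fun n : ℕ => (n : ℝ) * y) atTop atTop :=
        Tendsto.atTop_mul_const hy0 tendsto_natCast_atTop_atTop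
      have h2 : (fun n : ℕ => ψ n y) =
          (fun t : ℝ => t * (P {ω | t < |X ω|}).toReal) ∘ (fun n : ℕ => (n : ℝ) * y) := by
        funext n; simp [hψ, Function.comp]
      rw [h2]
      exact hK.comp htend
    · have key : ∀ (n : ℕ) (s : Set ℝ), MeasurableSet s →
          eLpNorm (s.indicator (ψ n)) 1 μ ≤ μ s * ENNReal.ofReal M := by
        intro n s hs
        rw [eLpNorm_indicator_eq_eLpNorm_restrict hs]
        have hae' : ∀ᵐ y ∂(μ.restrict s), ‖ψ n y‖ ≤ M :=
          (hae n).filter_mono (ae_mono Measure.restrict_le_self)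
        have := eLpNorm_le_of_ae_bound (p := 1) (μ := μ.restrict s) hae'
        simpa using this
      refine ⟨fun n => (hmeas n).aestronglyMeasurable, ?_, ?_⟩
      · intro ε hε
        refine ⟨ε / M, div_pos hε hM0, fun n s hs hμs => ?_⟩
        calc eLpNorm (s.indicator (ψ n)) 1 μ ≤ μ s * ENNReal.ofReal M := key n s hs
          _ ≤ ENNReal.ofReal (ε / M) * ENNReal.ofReal M :=
            mul_le_mul_left hμs _
          _ = ENNReal.ofReal (ε / M * M) :=
            (ENNReal.ofReal_mul (le_of_lt (div_pos hε hM0))).symm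
          _ = ENNReal.ofReal ε := by rw [div_mul_cancel₀ _ (ne_of_gt hM0)]
      · refine ⟨M.toNNReal, fun n => ?_⟩
        have := eLpNorm_le_of_ae_bound (p := 1) (μ := μ) (hae n)
        have hμuniv : μ Set.univ = 1 := by
          rw [hμ, Measure.restrict_apply_univ, Real.volume_Icc]
          norm_num
        calc eLpNorm (ψ n) 1 μ ≤ μ Set.univ ^ (1:ℝ≥0∞).toReal⁻¹ * ENNReal.ofReal M := this
          _ = ENNReal.ofReal M := by rw [hμuniv]; simp
          _ = (M.toNNReal : ℝ≥0∞) := rfl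
  · rintro ⟨h1, -⟩
    have h2 : Tendsto (fun n : ℕ => (n : ℝ) * (P {ω | (n : ℝ) < |X ω|}).toReal)
        atTop (nhds 0) := by
      have := h1 1 ⟨one_pos, le_refl 1⟩
      have heq : (fun n : ℕ => ψ n 1) =
          fun n : ℕ => (n : ℝ) * (P {ω | (n : ℝ) < |X ω|}).toReal := by
        funext n; rw [hψ]; simp
      rwa [heq] at this
    -- P(|X| > n) → 0
    have h3 : Tendsto (fun n : ℕ => (P {ω | (n : ℝ) < |X ω|}).toReal) atTop (nhds 0) := by
      apply squeeze_zero' (Eventually.of_forall fun n => hPnn _)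
      · filter_upwards [eventually_ge_atTop 1] with n hn
        calc (P {ω | (n : ℝ) < |X ω|}).toReal
            = 1 * (P {ω | (n : ℝ) < |X ω|}).toReal := (one_mul _).symm
          _ ≤ (n : ℝ) * (P {ω | (n : ℝ) < |X ω|}).toReal :=
            mul_le_mul_of_nonneg_right (by exact_mod_cast hn) (hPnn _)
      · exact h2
    have hg : Tendsto (fun n : ℕ => ((n : ℝ) + 1) * (P {ω | (n : ℝ) < |X ω|}).toReal)
        atTop (nhds 0) := by
      have : (fun n : ℕ => ((n : ℝ) + 1) * (P {ω | (n : ℝ) < |X ω|}).toReal) =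
          fun n : ℕ => (n : ℝ) * (P {ω | (n : ℝ) < |X ω|}).toReal +
            (P {ω | (n : ℝ) < |X ω|}).toReal := by
        funext n; ring
      rw [this]
      simpa using h2.add h3
    have hcomp : Tendsto (fun t : ℝ =>
        ((⌊t⌋₊ : ℝ) + 1) * (P {ω | (⌊t⌋₊ : ℝ) < |X ω|}).toReal) atTop (nhds 0) :=
      hg.comp tendsto_nat_floor_atTop
    apply tendsto_of_tendsto_of_tendsto_of_le_of_le' tendsto_const_nhds hcomp
    · filter_upwards [eventually_ge_atTop (0:ℝ)] with t ht
      exact mul_nonneg ht (hPnn _)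
    · filter_upwards [eventually_ge_atTop (0:ℝ)] with t ht
      have hfl : (⌊t⌋₊ : ℝ) ≤ t := Nat.floor_le ht
      have hfl' : t ≤ (⌊t⌋₊ : ℝ) + 1 := (Nat.lt_floor_add_one t).le
      have hsub : (P {ω | t < |X ω|}).toReal ≤ (P {ω | (⌊t⌋₊ : ℝ) < |X ω|}).toReal := by
        refine ENNReal.toReal_mono (measure_ne_top _ _) (measure_mono ?_)
        intro ω hω
        exact lt_of_le_of_lt hfl hω
      exact mul_le_mul hfl' hsub (hPnn _) (by positivity)
end

section
/- Kolmogorov's classical weak law of large numbers (the basis result, condition (1)): let X_1, X_2, … be independent identically distributed real random variables on a probability space (Ω, ℱ, P) satisfying t · P(|X_1| > t) → 0 as t → ∞. Set S_n := Σ_{k=1}^n X_k and a_n := E[X_1 · 1_{|X_1| ≤ n}]. Then (S_n/n) − a_n → 0 in probability, i.e. for every ε > 0, P(|S_n/n − a_n| ≥ ε) → 0 as n → ∞. -/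
/-!
Truncate at level `n`: put `Yₖ = Xₖ 1_{|Xₖ| ≤ n}`. Outside the event that some `|Xₖ| > n`, whose
probability is at most `n P(|X₁| > n) → 0`, the sum `Sₙ` equals `∑ Yₖ`, which has mean `n aₙ`
and, by pairwise independence, variance at most `n E[Y₁²]`; Chebyshev bounds the remaining
probability by `E[Y₁²] / (n ε²)`. Finally `E[Y₁²] ≤ ∑_{j<n} (2j+1) P(|X₁| > j)` and the terms
`(2j+1) P(|X₁| > j)` tend to `0`, so `E[Y₁²] / n → 0` by Cesàro.
-/

open MeasureTheory ProbabilityTheory Filter Finset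

noncomputable def absTrunc (c x : ℝ) : ℝ := if |x| ≤ c then x else 0

lemma measurable_absTrunc (c : ℝ) : Measurable (absTrunc c) :=
  Measurable.ite (measurableSet_le measurable_abs measurable_const) measurable_id measurable_const

lemma absTrunc_of_abs_le {c x : ℝ} (h : |x| ≤ c) : absTrunc c x = x := if_pos h

lemma absTrunc_of_lt_abs {c x : ℝ} (h : c < |x|) : absTrunc c x = 0 := if_neg (not_le.2 h)

lemma abs_absTrunc_le (c x : ℝ) : |absTrunc c x| ≤ |c| := by
  rcases le_or_gt |x| c with h | h
  · rw [absTrunc_of_abs_le h]; exact h.trans (le_abs_self c)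
  · rw [absTrunc_of_lt_abs h, abs_zero]; exact abs_nonneg c

lemma sum_range_two_mul_add_one (m : ℕ) :
    ∑ j ∈ range m, (2 * (j : ℝ) + 1) = (m : ℝ) ^ 2 := by
  induction m with
  | zero => simp
  | succ m ih => rw [sum_range_succ, ih]; push_cast; ring

lemma sq_absTrunc_le_sum_indicator (n : ℕ) (x : ℝ) :
    absTrunc n x ^ 2 ≤
      ∑ j ∈ range n, {y : ℝ | (j : ℝ) < |y|}.indicator (fun _ => 2 * (j : ℝ) + 1) x := by
  have hnonneg : ∀ j ∈ range n,
      0 ≤ {y : ℝ | (j : ℝ) < |y|}.indicator (fun _ => 2 * (j : ℝ) + 1) x :=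
    fun j _ => Set.indicator_nonneg (fun _ _ => by positivity) x
  rcases le_or_gt |x| n with h | h
  · calc absTrunc n x ^ 2 = |x| ^ 2 := by rw [absTrunc_of_abs_le h, sq_abs]
      _ ≤ (⌈|x|⌉₊ : ℝ) ^ 2 := by gcongr; exact Nat.le_ceil _
      _ = ∑ j ∈ range ⌈|x|⌉₊,
            {y : ℝ | (j : ℝ) < |y|}.indicator (fun _ => 2 * (j : ℝ) + 1) x := by
        rw [← sum_range_two_mul_add_one]
        exact sum_congr rfl fun j hj =>
          (Set.indicator_of_mem (s := {y : ℝ | (j : ℝ) < |y|}) (Nat.lt_ceil.1 (mem_range.1 hj))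
            (fun _ => 2 * (j : ℝ) + 1)).symm
      _ ≤ _ := sum_le_sum_of_subset_of_nonneg (range_subset_range.2 (Nat.ceil_le.2 h))
        fun j hj _ => hnonneg j hj
  · rw [absTrunc_of_lt_abs h, sq, zero_mul]
    exact sum_nonneg hnonneg

lemma setOf_le_abs_sum_div_sub_subset {Ω ι : Type*} (s : Finset ι) (X : ι → Ω → ℝ)
    (c a ε : ℝ) :
    {ω | ε ≤ |(∑ k ∈ s, X k ω) / #s - a|} ⊆
      (⋃ k ∈ s, {ω | c < |X k ω|}) ∪
        {ω | #s * ε ≤ |∑ k ∈ s, absTrunc c (X k ω) - #s * a|} := by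
  intro ω hω
  by_cases hbig : ∃ k ∈ s, c < |X k ω|
  · obtain ⟨k, hk, hck⟩ := hbig
    exact Or.inl (Set.mem_biUnion hk hck)
  · push Not at hbig
    right
    rcases s.eq_empty_or_nonempty with rfl | hs
    · simp
    have hN : (0 : ℝ) < #s := by exact_mod_cast hs.card_pos
    have htrunc : ∑ k ∈ s, absTrunc c (X k ω) = ∑ k ∈ s, X k ω :=
      sum_congr rfl fun k hk => absTrunc_of_abs_le (hbig k hk)
    have hω : ε ≤ |(∑ k ∈ s, X k ω) / #s - a| := hω
    rw [← mul_div_cancel_left₀ a hN.ne', ← sub_div, abs_div, abs_of_pos hN,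
      le_div_iff₀ hN] at hω
    rw [Set.mem_ofPred_eq, htrunc, mul_comm]
    exact hω

lemma indicator_setOf_abs_le_apply {Ω : Type*} (Z : Ω → ℝ) (c : ℝ) (ω : Ω) :
    {ω | |Z ω| ≤ c}.indicator Z ω = absTrunc c (Z ω) := by
  simp only [Set.indicator_apply, Set.mem_ofPred_eq, absTrunc]

section

variable {Ω : Type*} [MeasurableSpace Ω] {P : Measure Ω}

lemma integral_sq_absTrunc_le [IsFiniteMeasure P] {Z : Ω → ℝ} (hZ : Measurable Z) (n : ℕ) :
    ∫ ω, absTrunc n (Z ω) ^ 2 ∂P ≤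
      ∑ j ∈ range n, (2 * (j : ℝ) + 1) * P.real {ω | (j : ℝ) < |Z ω|} := by
  have hmeas (j : ℕ) : MeasurableSet {ω | (j : ℝ) < |Z ω|} :=
    measurableSet_lt measurable_const hZ.abs
  have hint (j : ℕ) :
      Integrable ({ω | (j : ℝ) < |Z ω|}.indicator fun _ => 2 * (j : ℝ) + 1) P :=
    (integrable_const _).indicator (hmeas j)
  calc ∫ ω, absTrunc n (Z ω) ^ 2 ∂P
      ≤ ∫ ω, ∑ j ∈ range n,
          {ω | (j : ℝ) < |Z ω|}.indicator (fun _ => 2 * (j : ℝ) + 1) ω ∂P := by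
        refine integral_mono_of_nonneg (ae_of_all _ fun ω => sq_nonneg _)
          (integrable_finsetSum _ fun j _ => hint j) (ae_of_all _ fun ω => ?_)
        exact sq_absTrunc_le_sum_indicator n (Z ω)
    _ = _ := by
        rw [integral_finsetSum _ fun j _ => hint j]
        refine sum_congr rfl fun j _ => ?_
        rw [integral_indicator_const _ (hmeas j), smul_eq_mul, mul_comm]

lemma tendsto_sum_div_of_tendsto_mul {p : ℕ → ℝ}
    (hp : Tendsto (fun j => j * p j) atTop (nhds 0)) :
    Tendsto (fun n : ℕ => (∑ j ∈ range n, (2 * (j : ℝ) + 1) * p j) / n) atTop (nhds 0) := by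
  have hp' : Tendsto p atTop (nhds 0) := by
    refine (hp.div_atTop tendsto_natCast_atTop_atTop).congr' ?_
    filter_upwards [eventually_ne_atTop 0] with j hj
    field_simp
  have h := ((hp.const_mul 2).add hp').cesaro
  simp only [mul_zero, add_zero] at h
  refine h.congr fun n => ?_
  rw [div_eq_inv_mul]
  congr 1
  refine sum_congr rfl fun j _ => ?_
  ring

lemma tendsto_integral_sq_absTrunc_div [IsFiniteMeasure P] {Z : Ω → ℝ} (hZ : Measurable Z)
    (hkol : Tendsto (fun n : ℕ => n * P.real {ω | (n : ℝ) < |Z ω|}) atTop (nhds 0)) :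
    Tendsto (fun n : ℕ => (∫ ω, absTrunc n (Z ω) ^ 2 ∂P) / n) atTop (nhds 0) :=
  squeeze_zero (fun n => div_nonneg (integral_nonneg fun _ => sq_nonneg _) n.cast_nonneg)
    (fun n => div_le_div_of_nonneg_right (integral_sq_absTrunc_le hZ n) n.cast_nonneg)
    (tendsto_sum_div_of_tendsto_mul hkol)

lemma measureReal_biUnion_lt_abs_le {ι : Type*} {s : Finset ι} {X : ι → Ω → ℝ} {Z : Ω → ℝ}
    (hident : ∀ k ∈ s, IdentDistrib (X k) Z P P) (c : ℝ) :
    P.real (⋃ k ∈ s, {ω | c < |X k ω|}) ≤ #s * P.real {ω | c < |Z ω|} := by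
  refine (measureReal_biUnion_finset_le _ _).trans_eq ?_
  have hlt : MeasurableSet {x : ℝ | c < |x|} := measurableSet_lt measurable_const measurable_abs
  have hk (k) (hk : k ∈ s) : P.real {ω | c < |X k ω|} = P.real {ω | c < |Z ω|} :=
    congrArg ENNReal.toReal ((hident k hk).measure_mem_eq hlt)
  rw [sum_congr rfl hk, sum_const, nsmul_eq_mul]

lemma measureReal_le_abs_sum_div_sub_integral_absTrunc_le [IsProbabilityMeasure P] {ι : Type*}
    {s : Finset ι} (hs : s.Nonempty) {X : ι → Ω → ℝ} {Z : Ω → ℝ}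
    (hindep : (s : Set ι).Pairwise fun i j => IndepFun (X i) (X j) P)
    (hident : ∀ k ∈ s, IdentDistrib (X k) Z P P) (c : ℝ) {ε : ℝ} (hε : 0 < ε) :
    P.real {ω | ε ≤ |(∑ k ∈ s, X k ω) / #s - ∫ ω, absTrunc c (Z ω) ∂P|}
      ≤ #s * P.real {ω | c < |Z ω|} + (∫ ω, absTrunc c (Z ω) ^ 2 ∂P) / (#s * ε ^ 2) := by
  set N : ℝ := (#s : ℝ)
  have hN : 0 < N := Nat.cast_pos.2 hs.card_pos
  have hZ : AEMeasurable Z P := (hident _ hs.choose_spec).aemeasurable_snd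
  set Y : ι → Ω → ℝ := fun k ω => absTrunc c (X k ω)
  have hYident (k) (hk : k ∈ s) : IdentDistrib (Y k) (absTrunc c ∘ Z) P P :=
    (hident k hk).comp (measurable_absTrunc c)
  have hYmem (k) (hk : k ∈ s) : MemLp (Y k) 2 P :=
    memLp_of_bounded (a := -|c|) (b := |c|) (ae_of_all _ fun ω => abs_le.1 (abs_absTrunc_le c _))
      (hYident k hk).aemeasurable_fst.aestronglyMeasurable 2
  have hmean : P[∑ k ∈ s, Y k] = N * ∫ ω, absTrunc c (Z ω) ∂P := by
    simp only [Finset.sum_apply]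
    rw [integral_finsetSum _ fun k hk => (hYmem k hk).integrable one_le_two,
      sum_congr rfl fun k hk => (hYident k hk).integral_eq, sum_const, nsmul_eq_mul]
    rfl
  have hvar : variance (∑ k ∈ s, Y k) P ≤ N * ∫ ω, absTrunc c (Z ω) ^ 2 ∂P := by
    rw [IndepFun.variance_sum hYmem fun i hi j hj hij =>
      (hindep hi hj hij).comp (measurable_absTrunc c) (measurable_absTrunc c),
      sum_congr rfl fun k hk => (hYident k hk).variance_eq, sum_const, nsmul_eq_mul]
    gcongr
    exact variance_le_expectation_sq
      ((measurable_absTrunc c).comp_aemeasurable hZ).aestronglyMeasurable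
  have hcheb : P.real {ω | N * ε ≤ |∑ k ∈ s, Y k ω - N * ∫ ω, absTrunc c (Z ω) ∂P|}
      ≤ (∫ ω, absTrunc c (Z ω) ^ 2 ∂P) / (N * ε ^ 2) := by
    have hTmem : MemLp (∑ k ∈ s, Y k) 2 P := memLp_finsetSum' _ hYmem
    have h := meas_ge_le_variance_div_sq hTmem (mul_pos hN hε)
    rw [hmean] at h
    calc _ ≤ variance (∑ k ∈ s, Y k) P / (N * ε) ^ 2 := by
          refine ENNReal.toReal_le_of_le_ofReal (div_nonneg (variance_nonneg _ _) (sq_nonneg _)) ?_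
          simpa only [Finset.sum_apply] using h
      _ ≤ N * (∫ ω, absTrunc c (Z ω) ^ 2 ∂P) / (N * ε) ^ 2 := by gcongr
      _ = _ := by field_simp
  calc _ ≤ _ := measureReal_mono (setOf_le_abs_sum_div_sub_subset s X c _ ε)
    _ ≤ _ := measureReal_union_le _ _
    _ ≤ _ := add_le_add (measureReal_biUnion_lt_abs_le hident c) hcheb

end

/-- Kolmogorov's classical weak law of large numbers: if
`X_1, X_2, …` are pairwise independent, identically distributed real random
variables with `t P(|X_1| > t) → 0` as `t → ∞`, then with
`a_n = E[X_1 · 1_{|X_1| ≤ n}]` one has `S_n/n − a_n → 0` in probability. -/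
theorem kolmogorov_classical_wlln
    {Ω : Type*} [MeasurableSpace Ω] (P : Measure Ω) [IsProbabilityMeasure P]
    (X : ℕ → Ω → ℝ) (hX : ∀ k, Measurable (X k))
    (hindep : ∀ i j : ℕ, i ≠ j → IndepFun (X i) (X j) P)
    (hident : ∀ k : ℕ, Measure.map (X k) P = Measure.map (X 1) P)
    (hkol : Tendsto (fun t : ℝ => t * (P {ω | t < |X 1 ω|}).toReal) atTop (nhds 0))
    (a : ℕ → ℝ)
    (ha : ∀ n : ℕ, a n = ∫ ω, Set.indicator {ω' | |X 1 ω'| ≤ (n : ℝ)} (X 1) ω ∂P) :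
    ∀ ε : ℝ, 0 < ε →
      Tendsto
        (fun n : ℕ =>
          (P {ω | ε ≤ |(∑ k ∈ Finset.Icc 1 n, X k ω) / n - a n|}).toReal)
        atTop (nhds 0) := by
  intro ε hε
  have hkol_nat : Tendsto (fun n : ℕ => n * P.real {ω | (n : ℝ) < |X 1 ω|}) atTop (nhds 0) :=
    hkol.comp tendsto_natCast_atTop_atTop
  have hbound : ∀ n ≥ 1, P.real {ω | ε ≤ |(∑ k ∈ Icc 1 n, X k ω) / n - a n|} ≤
      n * P.real {ω | (n : ℝ) < |X 1 ω|} +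
        (∫ ω, absTrunc n (X 1 ω) ^ 2 ∂P) / n * (ε ^ 2)⁻¹ := by
    intro n hn
    have h := measureReal_le_abs_sum_div_sub_integral_absTrunc_le (nonempty_Icc.2 hn)
      (fun i _ j _ hij => hindep i j hij)
      (fun k _ => ⟨(hX k).aemeasurable, (hX 1).aemeasurable, hident k⟩) n hε
    simp only [Nat.card_Icc, Nat.add_sub_cancel, ← indicator_setOf_abs_le_apply, ← ha] at h
    rwa [div_mul_eq_div_div, div_eq_mul_inv _ (ε ^ 2)] at h
  have hlim := hkol_nat.add
    ((tendsto_integral_sq_absTrunc_div (hX 1) hkol_nat).mul_const (ε ^ 2)⁻¹)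
  rw [zero_mul, add_zero] at hlim
  exact squeeze_zero' (Eventually.of_forall fun n => measureReal_nonneg)
    (eventually_ge_atTop 1 |>.mono hbound) hlim
end
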